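/- arXiv:1405.4084 — 3 statements merged into one kernel-verified Lean document; each statement's English description precedes it below -/
import Mathlib

section
/- In the ring R = ℤ[λ, c₁, …, c₂ₙ]/I (with I generated by the relations c_p = Σ_{i=0}^{p} (-1)^i binom(2n−i, p−i) c_i λ^{p−i}, p = 1,…,2n), the ideal generated by {2·c_p : p odd, 1 ≤ p ≤ 2n} is contained in the principal ideal λR. -/
open MvPolynomial Finset

/-- The variable `λ`. -/
noncomputable def lam : MvPolynomial ℕ ℤ := X 0

/-- The Chern class variables, with `cc 0 = 1` and `cc i = X i` for `i ≥ 1`. -/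
noncomputable def cc (i : ℕ) : MvPolynomial ℕ ℤ := if i = 0 then 1 else X i

/-- The defining relation `c_p - Σ_{i=0}^{p} (-1)^i C(2n-i, p-i) c_i λ^{p-i}`. -/
noncomputable def rel (n p : ℕ) : MvPolynomial ℕ ℤ :=
  cc p - ∑ i ∈ Finset.range (p + 1),
    (-1) ^ i * (Nat.choose (2 * n - i) (p - i) : MvPolynomial ℕ ℤ) * cc i * lam ^ (p - i)

/-- The ideal `I` generated by the relations for `p = 1, …, 2n`. -/
noncomputable def GOIdeal (n : ℕ) : Ideal (MvPolynomial ℕ ℤ) :=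
  Ideal.span {f | ∃ p : ℕ, 1 ≤ p ∧ p ≤ 2 * n ∧ f = rel n p}

theorem sum_mul_pow_sub_mem_span_singleton {R : Type*} [CommSemiring R] (x : R) (f : ℕ → R)
    (p : ℕ) : ∑ i ∈ range p, f i * x ^ (p - i) ∈ Ideal.span {x} :=
  Ideal.sum_mem _ fun _ hi =>
    Ideal.mul_mem_left _ _ <| Ideal.pow_mem_of_mem _ (Ideal.mem_span_singleton_self x) _ <|
      Nat.sub_pos_of_lt (mem_range.mp hi)

/-- For odd `p` the `i = p` term of `rel n p` is `-c_p`, so `rel n p` isolates `2 c_p`. -/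
theorem two_mul_cc_eq_rel_add_sum (n : ℕ) {p : ℕ} (hp : Odd p) :
    2 * cc p = rel n p + ∑ i ∈ range p,
      (-1) ^ i * (Nat.choose (2 * n - i) (p - i) : MvPolynomial ℕ ℤ) * cc i * lam ^ (p - i) := by
  rw [rel, sum_range_succ, hp.neg_one_pow]
  simp only [Nat.sub_self, Nat.choose_zero_right, Nat.cast_one, pow_zero]
  ring

theorem two_mul_cc_mem_span_lam_sup_GOIdeal (n : ℕ) {p : ℕ} (hp : Odd p) (hpn : p ≤ 2 * n) :
    2 * cc p ∈ Ideal.span {lam} ⊔ GOIdeal n := by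
  rw [two_mul_cc_eq_rel_add_sum n hp, add_comm]
  exact Submodule.add_mem_sup (sum_mul_pow_sub_mem_span_singleton lam _ p)
    (Ideal.subset_span ⟨p, hp.pos, hpn, rfl⟩)

theorem stmt_2 (n : ℕ) :
    Ideal.span {x : MvPolynomial ℕ ℤ ⧸ GOIdeal n |
        ∃ p : ℕ, Odd p ∧ 1 ≤ p ∧ p ≤ 2 * n ∧
          x = Ideal.Quotient.mk (GOIdeal n) (2 * cc p)} ≤
      Ideal.span {Ideal.Quotient.mk (GOIdeal n) lam} := by
  rw [Ideal.span_le]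
  rintro _ ⟨p, hp, -, hpn, rfl⟩
  rw [← Set.image_singleton, ← Ideal.map_span, SetLike.mem_coe, Ideal.mem_quotient_iff_mem_sup]
  exact two_mul_cc_mem_span_lam_sup_GOIdeal n hp hpn
end

section
/- Let q : R → A be a surjective ring homomorphism of commutative rings, B ⊆ R a subring such that q restricted to B is injective and B is torsion-free as an abelian group, and suppose for every a ∈ R there exists s ≥ 0 with 2^s·a ∈ B. Then ker(q) is contained in the torsion subgroup of (R, +), and q⁻¹(torsion subgroup of A) equals the torsion subgroup of R; consequently q induces an isomorphism R/T_R ≅ A/T_A of the quotients by torsion subgroups. -/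
/-!
If `q` is injective on `B` and every element has a power-of-two multiple in `B`, then an element
`x` of the kernel has a multiple `2 ^ s • x ∈ B` with `q (2 ^ s • x) = 0 = q 0`, so `2 ^ s • x = 0`:
the kernel is torsion. Hence `q x` is torsion only if `x` is, and `q` composed with the projection
onto `A ⧸ T_A` is a surjection with kernel exactly `T_R`.
-/

open AddCommGroup

section TorsionQuotient

variable {G H : Type*} [AddCommGroup G] [AddCommGroup H]

theorem AddMonoidHom.mem_torsion_of_map_eq_zero (f : G →+ H) {B : AddSubgroup G}
    (hinj : Set.InjOn f B) (hB : ∀ x : G, ∃ n : ℕ, n ≠ 0 ∧ n • x ∈ B) {x : G} (hx : f x = 0) :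
    x ∈ torsion G := by
  obtain ⟨n, hn, hnx⟩ := hB x
  have hzero : n • x = 0 := hinj hnx B.zero_mem (by rw [map_nsmul, hx, smul_zero, map_zero])
  exact isOfFinAddOrder_iff_nsmul_eq_zero.mpr ⟨n, Nat.pos_of_ne_zero hn, hzero⟩

theorem AddMonoidHom.comap_torsion_eq_of_ker_le {f : G →+ H} (hker : f.ker ≤ torsion G) :
    (torsion H).comap f = torsion G := by
  refine le_antisymm (fun x hx => ?_) (le_comap_torsion f)
  obtain ⟨n, hn, hnx⟩ := isOfFinAddOrder_iff_nsmul_eq_zero.mp hx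
  have hker_nx : n • x ∈ f.ker := by rw [AddMonoidHom.mem_ker, map_nsmul]; exact hnx
  exact (hker hker_nx).of_nsmul hn.ne'

noncomputable def AddMonoidHom.quotientTorsionEquivOfSurjective {f : G →+ H}
    (hf : Function.Surjective f) (hcomap : (torsion H).comap f = torsion G) :
    G ⧸ torsion G ≃+ H ⧸ torsion H :=
  QuotientAddGroup.liftEquiv (φ := (QuotientAddGroup.mk' (torsion H)).comp f) _
    ((QuotientAddGroup.mk'_surjective _).comp hf) <| by
    rw [← AddMonoidHom.comap_ker, QuotientAddGroup.ker_mk', hcomap]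

end TorsionQuotient

theorem two_pow_mul_eq_nsmul {R : Type*} [Semiring R] (s : ℕ) (a : R) :
    (2 : R) ^ s * a = (2 ^ s : ℕ) • a := by
  rw [nsmul_eq_mul, Nat.cast_pow, Nat.cast_ofNat]

theorem stmt_5_general (R A : Type*) [CommRing R] [CommRing A] (q : R →+* A)
    (hq : Function.Surjective q) (B : Subring R)
    (hinj : Set.InjOn q (B : Set R))
    (hdense : ∀ a : R, ∃ s : ℕ, (2 : R) ^ s * a ∈ B) :
    (∀ x : R, q x = 0 → x ∈ AddCommGroup.torsion R) ∧
    (⇑q ⁻¹' (AddCommGroup.torsion A : Set A) = (AddCommGroup.torsion R : Set R)) ∧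
    ∃ e : R ⧸ (AddCommGroup.torsion R) ≃+ A ⧸ (AddCommGroup.torsion A),
      ∀ r : R, e (QuotientAddGroup.mk r) = QuotientAddGroup.mk (q r) := by
  have hB : ∀ a : R, ∃ n : ℕ, n ≠ 0 ∧ n • a ∈ B.toAddSubgroup := fun a => by
    obtain ⟨s, hs⟩ := hdense a
    exact ⟨2 ^ s, by positivity, two_pow_mul_eq_nsmul s a ▸ hs⟩
  have hker (x : R) (hx : q x = 0) : x ∈ torsion R :=
    q.toAddMonoidHom.mem_torsion_of_map_eq_zero hinj hB hx
  have hcomap : (torsion A).comap q.toAddMonoidHom = torsion R :=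
    AddMonoidHom.comap_torsion_eq_of_ker_le fun x hx => hker x hx
  exact ⟨hker, congrArg SetLike.coe hcomap,
    AddMonoidHom.quotientTorsionEquivOfSurjective hq hcomap, fun _ => rfl⟩

theorem stmt_5 (R A : Type*) [CommRing R] [CommRing A] (q : R →+* A)
    (hq : Function.Surjective q) (B : Subring R)
    (hinj : Set.InjOn q (B : Set R))
    (htf : ∀ b ∈ B, ∀ m : ℤ, m ≠ 0 → m • b = 0 → b = 0)
    (hdense : ∀ a : R, ∃ s : ℕ, (2 : R) ^ s * a ∈ B) :
    (∀ x : R, q x = 0 → x ∈ AddCommGroup.torsion R) ∧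
    (⇑q ⁻¹' (AddCommGroup.torsion A : Set A) = (AddCommGroup.torsion R : Set R)) ∧
    ∃ e : R ⧸ (AddCommGroup.torsion R) ≃+ A ⧸ (AddCommGroup.torsion A),
      ∀ r : R, e (QuotientAddGroup.mk r) = QuotientAddGroup.mk (q r) :=
  stmt_5_general R A q hq B hinj hdense
end

section
/- The map ℤ[λ, c₂, c₄, …, c₂ₙ] → ℤ[λ, t₁, …, tₙ] sending λ ↦ λ and c₂ᵢ to the 2i-th elementary symmetric polynomial of (λ+t₁, …, λ+tₙ, −t₁, …, −tₙ) (additive notation for the character lattice of the maximal torus Γ ⊂ GO(2n)) is injective. Consequently λ, c₂, c₄, …, c₂ₙ are algebraically independent over ℤ. -/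
open MvPolynomial

/-- The multiset of the `2n` weights `λ + t₁, …, λ + tₙ, −t₁, …, −tₙ` of the defining
representation of `GO(2n)` restricted to the maximal torus, written additively in the
character lattice of the torus (where `X none = λ` and `X (some j) = tⱼ`). -/
noncomputable def torusWeights (n : ℕ) : Multiset (MvPolynomial (Option (Fin n)) ℤ) :=
  Multiset.map (fun j => X none + X (some j)) (Finset.univ.val : Multiset (Fin n)) +
    Multiset.map (fun j => -X (some j)) (Finset.univ.val : Multiset (Fin n))

/-- The map `ℤ[λ, c₂, c₄, …, c₂ₙ] → ℤ[λ, t₁, …, tₙ]` sending `λ ↦ λ` and `c₂ᵢ` to the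
`2i`-th elementary symmetric polynomial in the torus weights. -/
noncomputable def torusRestriction (n : ℕ) :
    MvPolynomial (Fin (n + 1)) ℤ →+* MvPolynomial (Option (Fin n)) ℤ :=
  (MvPolynomial.aeval fun i : Fin (n + 1) =>
    if i = 0 then X none else (torusWeights n).esymm (2 * (i : ℕ))).toRingHom

noncomputable section Aux

/-- A surjective ring endomorphism of a Noetherian commutative ring is injective. -/
theorem ringEndo_injective_of_surjective {B : Type*} [CommRing B] [IsNoetherianRing B]
    (f : B →+* B) (hf : Function.Surjective f) : Function.Injective f := by
  -- iterate f
  let F : ℕ → B →+* B := fun k => Nat.rec (RingHom.id B) (fun _ g => f.comp g) k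
  have hFsucc : ∀ k, F (k + 1) = f.comp (F k) := fun k => rfl
  have hFsurj : ∀ k, Function.Surjective (F k) := by
    intro k; induction k with
    | zero => exact Function.surjective_id
    | succ k ih => exact hf.comp ih
  have hmono : Monotone fun k => RingHom.ker (F k) := by
    apply monotone_nat_of_le_succ
    intro k x hx
    have : F k x = 0 := hx
    show F (k + 1) x = 0
    rw [hFsucc, RingHom.comp_apply, this, map_zero]
  obtain ⟨N, hN⟩ := monotone_stabilizes_iff_noetherian.mpr
    (inferInstance : IsNoetherian B B) ⟨fun k => RingHom.ker (F k), hmono⟩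
  rw [injective_iff_map_eq_zero]
  intro x hx
  obtain ⟨y, hy⟩ := hFsurj N x
  have hy1 : F (N + 1) y = 0 := by
    rw [hFsucc, RingHom.comp_apply, hy, hx]
  have hker : y ∈ RingHom.ker (F N) := by
    have h2 : RingHom.ker (F N) = RingHom.ker (F (N + 1)) := hN (N + 1) (Nat.le_succ N)
    rw [h2]
    exact hy1
  rw [← hy]; exact hker

/-- Ring homs commute with `Multiset.esymm`. -/
theorem map_multiset_esymm {A B : Type*} [CommRing A] [CommRing B] (f : A →+* B)
    (s : Multiset A) (k : ℕ) : f (s.esymm k) = (s.map f).esymm k := by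
  simp only [Multiset.esymm, map_multiset_sum, Multiset.map_map, Multiset.powersetCard_map,
    Function.comp]
  congr 1
  apply Multiset.map_congr rfl
  intro t _
  exact map_multiset_prod f t

variable (n : ℕ)

/-- `λ` as element of `ℤ[λ][t₁,…,tₙ]`. -/
def lamB : MvPolynomial (Fin n) (Polynomial ℤ) := C Polynomial.X

/-- `u_j = t_j (t_j + λ)`. -/
def uu (j : Fin n) : MvPolynomial (Fin n) (Polynomial ℤ) := X j * (X j + lamB n)

def Uu : Multiset (MvPolynomial (Fin n) (Polynomial ℤ)) :=
  (Finset.univ.val : Multiset (Fin n)).map (uu n)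

/-- The weights, after moving `λ` into the base ring. -/
def Ww : Multiset (MvPolynomial (Fin n) (Polynomial ℤ)) :=
  (Finset.univ.val : Multiset (Fin n)).map (fun j => lamB n + X j) +
    (Finset.univ.val : Multiset (Fin n)).map (fun j => -X j)

/-- `Z₀ = Y (Y + λ) ∈ ℤ[λ][Y]`. -/
def Z0 : Polynomial (Polynomial ℤ) :=
  Polynomial.X * (Polynomial.X + Polynomial.C Polynomial.X)

/-- Coefficients of the triangular linear system. -/
def rr (m k : ℕ) : Polynomial ℤ := (-1) ^ k * (Z0 ^ (n - k)).coeff (2 * n - 2 * m)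

def XeN : ℕ → MvPolynomial (Fin n) (Polynomial ℤ)
  | 0 => 1
  | (k + 1) => if h : k < n then X ⟨k, h⟩ else 0

def gg (i : Fin n) : MvPolynomial (Fin n) (Polynomial ℤ) :=
  ∑ k ∈ Finset.range (n + 1), C (rr n ((i : ℕ) + 1) k) * XeN n k

lemma Z0_monic : (Z0).Monic := Polynomial.monic_X.mul (Polynomial.monic_X_add_C _)

lemma Z0_natDegree : (Z0).natDegree = 2 := by
  rw [Z0, Polynomial.natDegree_mul (by exact Polynomial.X_ne_zero)
    (Polynomial.monic_X_add_C _).ne_zero, Polynomial.natDegree_X,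
    Polynomial.natDegree_X_add_C]

lemma card_Uu : Multiset.card (Uu n) = n := by
  simp [Uu]

lemma card_Ww : Multiset.card (Ww n) = 2 * n := by
  simp [Ww]; ring

/-- The key Vieta computation. -/
lemma esymm_Ww (m : ℕ) (hm : m ≤ n) :
    (Ww n).esymm (2 * m) =
      ∑ k ∈ Finset.range (n + 1), C (rr n m k) * (Uu n).esymm k := by
  classical
  set Zb : Polynomial (MvPolynomial (Fin n) (Polynomial ℤ)) :=
    Polynomial.X * (Polynomial.X + Polynomial.C (lamB n)) with hZb
  set ev : Polynomial (MvPolynomial (Fin n) (Polynomial ℤ)) →+*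
      Polynomial (MvPolynomial (Fin n) (Polynomial ℤ)) :=
    Polynomial.eval₂RingHom (Polynomial.C) Zb with hev
  have hevX : ev Polynomial.X = Zb := Polynomial.eval₂_X _ _
  have hevC : ∀ r, ev (Polynomial.C r) = Polynomial.C r := fun r => Polynomial.eval₂_C _ _
  -- Step A : esymm as a coefficient
  have hA : (Ww n).esymm (2 * m) =
      (((Ww n).map (fun r => Polynomial.X + Polynomial.C r)).prod).coeff (2 * n - 2 * m) := by
    rw [Multiset.prod_X_add_C_coeff (Ww n) (by rw [card_Ww]; omega), card_Ww]
    congr 1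
    omega
  -- Step B : the product factors through Zb
  have hB : ((Ww n).map (fun r => Polynomial.X + Polynomial.C r)).prod =
      ev (((Uu n).map (fun r => Polynomial.X - Polynomial.C r)).prod) := by
    rw [map_multiset_prod, Multiset.map_map]
    have h1 : Multiset.map (⇑ev ∘ fun r => Polynomial.X - Polynomial.C r) (Uu n) =
        Multiset.map (fun r => Zb - Polynomial.C r) (Uu n) := by
      apply Multiset.map_congr rfl
      intro r _
      rw [Function.comp_apply, map_sub ev, hevX, hevC]
    rw [h1, Ww, Multiset.map_add, Multiset.prod_add, Uu, Multiset.map_map, Multiset.map_map,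
      Multiset.map_map]
    rw [← Finset.prod_eq_multiset_prod, ← Finset.prod_eq_multiset_prod,
      ← Finset.prod_eq_multiset_prod, ← Finset.prod_mul_distrib]
    apply Finset.prod_congr rfl
    intro j _
    simp only [Function.comp, uu, map_add, map_neg, map_mul]
    ring
  -- Step C : Vieta for the u's, with constants inside `Polynomial.C`
  have hC : ((Uu n).map (fun r => Polynomial.X - Polynomial.C r)).prod =
      ∑ j ∈ Finset.range (n + 1),
        Polynomial.C ((-1) ^ j * (Uu n).esymm j) * Polynomial.X ^ (n - j) := by
    rw [Multiset.prod_X_sub_X_eq_sum_esymm, card_Uu]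
    apply Finset.sum_congr rfl
    intro j _
    rw [Polynomial.C_mul, ← mul_assoc]
    rw [map_pow, Polynomial.C_neg, Polynomial.C_1]
  rw [hA, hB, hC, map_sum ev]
  rw [Polynomial.finset_sum_coeff]
  apply Finset.sum_congr rfl
  intro j hj
  rw [map_mul ev, map_pow ev, hevX, hevC, Polynomial.coeff_C_mul]
  -- identify the coefficient of Zb with a base-ring element
  have hZbmap : Zb = Polynomial.map (C : Polynomial ℤ →+* MvPolynomial (Fin n) (Polynomial ℤ)) Z0 := by
    simp [hZb, Z0, lamB, Polynomial.map_mul, Polynomial.map_add]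
  rw [hZbmap, ← Polynomial.map_pow, Polynomial.coeff_map, rr]
  simp only [map_mul, map_pow, map_neg, map_one]
  ring

lemma rr_diag (k : ℕ) (hk : k < n) : rr n (k + 1) (k + 1) = (-1) ^ (k + 1) := by
  rw [rr]
  have h1 : (Z0 ^ (n - (k + 1))).natDegree = 2 * n - 2 * (k + 1) := by
    rw [Polynomial.natDegree_pow, Z0_natDegree]
    omega
  have h2 : (Z0 ^ (n - (k + 1))).coeff (2 * n - 2 * (k + 1)) = 1 := by
    rw [← h1]
    exact (Z0_monic.pow _).coeff_natDegree
  rw [h2, mul_one]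

lemma rr_high (m k : ℕ) (hmk : m < k) (hkn : k ≤ n) : rr n m k = 0 := by
  rw [rr]
  have h1 : (Z0 ^ (n - k)).natDegree < 2 * n - 2 * m := by
    rw [Polynomial.natDegree_pow, Z0_natDegree]
    omega
  rw [Polynomial.coeff_eq_zero_of_natDegree_lt h1, mul_zero]

lemma indep_uu : AlgebraicIndependent (Polynomial ℤ) (uu n) := by
  have hT : Transcendental (Polynomial ℤ) Z0 :=
    Polynomial.transcendental _ (by rw [Z0_natDegree]; norm_num)
      (by rw [Z0_monic.leadingCoeff]; exact one_mem _)
  have h := MvPolynomial.algebraicIndependent_polynomial_aeval_X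
    (fun _ : Fin n => Z0) (fun _ => hT)
  have heq : (fun j : Fin n => Polynomial.aeval (X j : MvPolynomial (Fin n) (Polynomial ℤ)) Z0)
      = uu n := by
    funext j
    rw [Z0, map_mul, map_add, Polynomial.aeval_X, Polynomial.aeval_C, uu, lamB,
      MvPolynomial.algebraMap_eq]
  rw [← heq]
  exact h

lemma inj_aeval_v :
    Function.Injective (aeval (fun i : Fin n => (Uu n).esymm ((i : ℕ) + 1)) :
      MvPolynomial (Fin n) (Polynomial ℤ) →ₐ[Polynomial ℤ] _) := by
  have h1 : Function.Injective
      (aeval (fun i : Fin n => esymm (Fin n) (Polynomial ℤ) ((i : ℕ) + 1)) :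
        MvPolynomial (Fin n) (Polynomial ℤ) →ₐ[Polynomial ℤ] _) := by
    intro p q hpq
    apply esymmAlgHom_fin_injective (R := Polynomial ℤ) (le_refl n)
    apply Subtype.ext
    rw [esymmAlgHom_apply, esymmAlgHom_apply]
    exact hpq
  have h2 : Function.Injective (aeval (uu n) :
      MvPolynomial (Fin n) (Polynomial ℤ) →ₐ[Polynomial ℤ] _) :=
    algebraicIndependent_iff_injective_aeval.mp (indep_uu n)
  have hcomp : (aeval (fun i : Fin n => (Uu n).esymm ((i : ℕ) + 1)) :
      MvPolynomial (Fin n) (Polynomial ℤ) →ₐ[Polynomial ℤ] _) =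
      (aeval (uu n)).comp
        (aeval (fun i : Fin n => esymm (Fin n) (Polynomial ℤ) ((i : ℕ) + 1))) := by
    apply MvPolynomial.algHom_ext
    intro i
    rw [aeval_X, AlgHom.comp_apply, aeval_X, aeval_esymm_eq_multiset_esymm]
    rfl
  rw [hcomp, AlgHom.coe_comp]
  exact h2.comp h1

lemma aeval_XeN (k : ℕ) (hk : k ≤ n) :
    aeval (fun i : Fin n => (Uu n).esymm ((i : ℕ) + 1)) (XeN n k) = (Uu n).esymm k := by
  match k with
  | 0 => rw [XeN, map_one]; simp [Multiset.esymm, Multiset.powersetCard_zero_left]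
  | (k + 1) =>
    have hkn : k < n := hk
    rw [XeN, dif_pos hkn, aeval_X]

lemma surj_aeval_g :
    Function.Surjective (aeval (gg n) :
      MvPolynomial (Fin n) (Polynomial ℤ) →ₐ[Polynomial ℤ] _) := by
  classical
  have hX : ∀ k : ℕ, k ≤ n → XeN n k ∈ (aeval (gg n) :
      MvPolynomial (Fin n) (Polynomial ℤ) →ₐ[Polynomial ℤ] _).range := by
    intro k
    induction k using Nat.strong_induction_on with
    | _ k ih =>
      intro hk
      match k with
      | 0 => exact ⟨1, map_one _⟩
      | (k + 1) =>
        have hkn : k < n := hk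
        have hgg : gg n ⟨k, hkn⟩ = C ((-1 : Polynomial ℤ) ^ (k + 1)) * XeN n (k + 1) +
            ∑ j ∈ Finset.range (k + 1), C (rr n (k + 1) j) * XeN n j := by
          rw [gg]
          have hsub : Finset.range (k + 2) ⊆ Finset.range (n + 1) :=
            Finset.range_subset_range.mpr (by omega)
          have hzero : ∀ j ∈ Finset.range (n + 1), j ∉ Finset.range (k + 2) →
              C (rr n (((⟨k, hkn⟩ : Fin n) : ℕ) + 1) j) * XeN n j = 0 := by
            intro j hj hj2
            rw [Finset.mem_range] at hj hj2
            have : rr n (k + 1) j = 0 := rr_high n (k + 1) j (by omega) (by omega)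
            show C (rr n (k + 1) j) * XeN n j = 0
            rw [this, map_zero, zero_mul]
          rw [← Finset.sum_subset hsub hzero]
          show ∑ j ∈ Finset.range (k + 2), C (rr n (k + 1) j) * XeN n j = _
          rw [Finset.sum_range_succ, rr_diag n k hkn, add_comm]
        have hunit : C ((-1 : Polynomial ℤ) ^ (k + 1)) * C ((-1 : Polynomial ℤ) ^ (k + 1))
            = (1 : MvPolynomial (Fin n) (Polynomial ℤ)) := by
          rw [← map_mul, ← pow_add, Even.neg_one_pow ⟨k + 1, by ring⟩, map_one]
        have hXe : XeN n (k + 1) = C ((-1 : Polynomial ℤ) ^ (k + 1)) *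
            (gg n ⟨k, hkn⟩ - ∑ j ∈ Finset.range (k + 1), C (rr n (k + 1) j) * XeN n j) := by
          rw [hgg, add_sub_cancel_right, ← mul_assoc, hunit, one_mul]
        rw [hXe]
        refine Subalgebra.mul_mem _ ?_ (Subalgebra.sub_mem _ ⟨X ⟨k, hkn⟩, aeval_X _ _⟩
          (Subalgebra.sum_mem _ fun j hj => Subalgebra.mul_mem _ ?_ ?_))
        · exact ⟨C ((-1 : Polynomial ℤ) ^ (k + 1)), by
            show aeval (gg n) _ = _
            rw [aeval_C, MvPolynomial.algebraMap_eq]⟩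
        · exact ⟨C (rr n (k + 1) j), by
            show aeval (gg n) _ = _
            rw [aeval_C, MvPolynomial.algebraMap_eq]⟩
        · rw [Finset.mem_range] at hj
          exact ih j (by omega) (by omega)
  intro p
  induction p using MvPolynomial.induction_on with
  | C a => exact ⟨C a, by
      show aeval (gg n) _ = _
      rw [aeval_C, MvPolynomial.algebraMap_eq]⟩
  | add p q hp hq =>
    obtain ⟨p', hp'⟩ := hp; obtain ⟨q', hq'⟩ := hq
    exact ⟨p' + q', by rw [map_add, hp', hq']⟩
  | mul_X p i hp =>
    obtain ⟨p', hp'⟩ := hp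
    obtain ⟨x, hx⟩ := hX ((i : ℕ) + 1) (by omega)
    have hx' : aeval (gg n) x = XeN n ((i : ℕ) + 1) := hx
    refine ⟨p' * x, ?_⟩
    rw [map_mul, hp', hx']
    congr 1
    rw [XeN, dif_pos i.isLt, Fin.eta]

lemma inj_aeval_h :
    Function.Injective (aeval (fun i : Fin n => (Ww n).esymm (2 * ((i : ℕ) + 1))) :
      MvPolynomial (Fin n) (Polynomial ℤ) →ₐ[Polynomial ℤ] _) := by
  have hg : Function.Injective (aeval (gg n) :
      MvPolynomial (Fin n) (Polynomial ℤ) →ₐ[Polynomial ℤ] _) :=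
    ringEndo_injective_of_surjective (aeval (gg n)).toRingHom (surj_aeval_g n)
  have hcomp : (aeval (fun i : Fin n => (Ww n).esymm (2 * ((i : ℕ) + 1))) :
      MvPolynomial (Fin n) (Polynomial ℤ) →ₐ[Polynomial ℤ] _) =
      (aeval (fun i : Fin n => (Uu n).esymm ((i : ℕ) + 1))).comp (aeval (gg n)) := by
    apply MvPolynomial.algHom_ext
    intro i
    rw [aeval_X, AlgHom.comp_apply, aeval_X, gg, map_sum,
      esymm_Ww n ((i : ℕ) + 1) (by omega)]
    apply Finset.sum_congr rfl
    intro k hk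
    rw [Finset.mem_range] at hk
    rw [map_mul, aeval_C, MvPolynomial.algebraMap_eq, aeval_XeN n k (by omega)]
  rw [hcomp, AlgHom.coe_comp]
  exact (inj_aeval_v n).comp hg

end Aux

theorem stmt_17 (n : ℕ) : Function.Injective (torusRestriction n) := by
  classical
  set L : MvPolynomial (Option (Fin n)) ℤ ≃ₐ[ℤ] MvPolynomial (Fin n) (Polynomial ℤ) :=
    optionEquivRight ℤ (Fin n) with hLdef
  set LR : MvPolynomial (Option (Fin n)) ℤ →+* MvPolynomial (Fin n) (Polynomial ℤ) :=
    L.toAlgHom.toRingHom with hLRdef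
  set ψ : MvPolynomial (Fin (n + 1)) ℤ →+* MvPolynomial (Fin n) (Polynomial ℤ) :=
    LR.comp (rename (finSuccEquiv n)).toRingHom with hψdef
  have hψinj : Function.Injective ψ := by
    rw [hψdef, RingHom.coe_comp]
    exact (L.injective).comp (rename_injective _ (finSuccEquiv n).injective)
  have hWmap : (torusWeights n).map LR = Ww n := by
    rw [torusWeights, Ww, Multiset.map_add, Multiset.map_map, Multiset.map_map]
    congr 1
    · apply Multiset.map_congr rfl
      intro j _
      show L (X none + X (some j)) = lamB n + X j
      rw [map_add, optionEquivRight_X_none, optionEquivRight_X_some, lamB]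
    · apply Multiset.map_congr rfl
      intro j _
      show L (-X (some j)) = -X j
      rw [map_neg, optionEquivRight_X_some]
  have key : LR.comp (torusRestriction n) =
      ((aeval (fun i : Fin n => (Ww n).esymm (2 * ((i : ℕ) + 1))) :
        MvPolynomial (Fin n) (Polynomial ℤ) →ₐ[Polynomial ℤ] _).toRingHom).comp ψ := by
    apply MvPolynomial.ringHom_ext
    · intro r
      have hCr : (C r : MvPolynomial (Fin (n + 1)) ℤ) = (r : MvPolynomial (Fin (n + 1)) ℤ) :=
        eq_intCast (C : ℤ →+* MvPolynomial (Fin (n + 1)) ℤ) r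
      rw [hCr, map_intCast, map_intCast]
    · intro i
      have hTX : torusRestriction n (X i) =
          (if i = 0 then X none else (torusWeights n).esymm (2 * (i : ℕ))) := by
        show aeval _ (X i) = _
        rw [aeval_X]
      induction i using Fin.cases with
      | zero =>
        rw [RingHom.comp_apply, RingHom.comp_apply, hTX, if_pos rfl]
        have hψ0 : ψ (X 0) = C Polynomial.X := by
          rw [hψdef, RingHom.comp_apply]
          show LR (rename (finSuccEquiv n) (X 0)) = _
          rw [rename_X, finSuccEquiv_zero]
          show L (X none) = _
          rw [optionEquivRight_X_none]
        rw [hψ0]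
        show L (X none) = aeval _ (C Polynomial.X)
        rw [optionEquivRight_X_none, aeval_C, MvPolynomial.algebraMap_eq]
      | succ j =>
        rw [RingHom.comp_apply, RingHom.comp_apply, hTX, if_neg (Fin.succ_ne_zero j)]
        have hψj : ψ (X j.succ) = X j := by
          rw [hψdef, RingHom.comp_apply]
          show LR (rename (finSuccEquiv n) (X j.succ)) = _
          rw [rename_X, finSuccEquiv_succ]
          show L (X (some j)) = _
          rw [optionEquivRight_X_some]
        rw [hψj]
        show LR ((torusWeights n).esymm (2 * ((j.succ : Fin (n+1)) : ℕ))) = aeval _ (X j)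
        rw [map_multiset_esymm, hWmap, aeval_X, Fin.val_succ]
  have hcompinj : Function.Injective (LR.comp (torusRestriction n)) := by
    rw [key, RingHom.coe_comp]
    exact Function.Injective.comp (inj_aeval_h n) hψinj
  intro a b hab
  apply hcompinj
  rw [RingHom.comp_apply, RingHom.comp_apply, hab]
end
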